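/- arXiv:0912.5396 — 2 statements merged into one kernel-verified Lean document; each statement's English description precedes it below -/
import Mathlib

section
/- Let X be a separable complex Banach space and D the closed unit disc. The set Δ = {(T, λ) ∈ L(X) × D : λ ∈ σ(T)} (where σ(T) = {λ ∈ D : T − λI not invertible}) is a Borel subset of L(X) × D, where L(X) carries the Borel structure of the strong operator topology. -/
open Metric

/-- The strong operator topology on `L(X)`. -/
def SOT (𝕜 X : Type*) [NontriviallyNormedField 𝕜] [NormedAddCommGroup X]
    [NormedSpace 𝕜 X] : TopologicalSpace (X →L[𝕜] X) :=
  TopologicalSpace.induced (fun T => (T : X → X)) Pi.topologicalSpace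

/-- The product of the strong operator topology on `L(X)` and the subspace
topology on the closed unit disc `D`. -/
noncomputable def SOTprodD (X : Type*) [NormedAddCommGroup X] [NormedSpace ℂ X] :
    TopologicalSpace ((X →L[ℂ] X) × (closedBall (0 : ℂ) 1)) :=
  @instTopologicalSpaceProd _ _ (SOT ℂ X) _

/-!
On a Banach space, `λ - T` is invertible iff it has dense range and is bounded below
(antilipschitz). Both conditions are Borel in `(T, λ)` for the strong operator topology, since
only the continuity of `(T, λ) ↦ (λ - T) x` for each fixed `x` is used. Being antilipschitz with
constant `K` is an intersection of closed conditions, one per pair of points, so being bounded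
below is `F_σ`. A range is dense iff it comes arbitrarily close to each point of a countable dense
subset of `X`, and coming within `ε` of a point is open, so dense range is `G_δ`.
-/

open Set Topology
open scoped NNReal

theorem AntilipschitzWith.weaken {α β : Type*} [PseudoEMetricSpace α] [PseudoEMetricSpace β]
    {K K' : ℝ≥0} {f : α → β} (hf : AntilipschitzWith K f) (h : K ≤ K') :
    AntilipschitzWith K' f := fun x y =>
  (hf x y).trans (mul_le_mul_left (ENNReal.coe_le_coe.2 h) _)

theorem ContinuousLinearMap.isUnit_iff_denseRange_and_antilipschitz {𝕜 E : Type*}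
    [NontriviallyNormedField 𝕜] [NormedAddCommGroup E] [NormedSpace 𝕜 E] [CompleteSpace E]
    (f : E →L[𝕜] E) : IsUnit f ↔ DenseRange f ∧ ∃ K, AntilipschitzWith K f := by
  rw [isUnit_iff_bijective, bijective_iff_dense_range_and_antilipschitz,
    ← Submodule.dense_iff_topologicalClosure_eq_top]
  rfl

section FamilyOfMaps

variable {α β γ : Type*} [TopologicalSpace α] {g : α → β → γ}

theorem isClosed_setOf_antilipschitzWith [PseudoEMetricSpace β] [PseudoEMetricSpace γ]
    (hg : ∀ x, Continuous fun a => g a x) (K : ℝ≥0) :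
    IsClosed {a | AntilipschitzWith K (g a)} := by
  simp only [AntilipschitzWith, ofPred_forall]
  exact isClosed_iInter fun x => isClosed_iInter fun y => isClosed_le continuous_const <|
    (ENNReal.continuous_const_mul ENNReal.coe_ne_top).comp ((hg x).edist (hg y))

theorem isGδ_setOf_mem_closure_range [PseudoMetricSpace γ]
    (hg : ∀ x, Continuous fun a => g a x) (y : γ) :
    IsGδ {a | y ∈ closure (range (g a))} := by
  simp only [mem_closure_range_iff_nat, ofPred_forall, ofPred_exists]
  exact .iInter fun n => (isOpen_iUnion fun x =>
    isOpen_lt (continuous_const.dist (hg x)) continuous_const).isGδ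

variable [MeasurableSpace α] [OpensMeasurableSpace α]

theorem measurableSet_setOf_exists_antilipschitzWith [PseudoEMetricSpace β]
    [PseudoEMetricSpace γ] (hg : ∀ x, Continuous fun a => g a x) :
    MeasurableSet {a | ∃ K, AntilipschitzWith K (g a)} := by
  have h : {a | ∃ K, AntilipschitzWith K (g a)} = ⋃ n : ℕ, {a | AntilipschitzWith n (g a)} :=
    Subset.antisymm (fun a ⟨K, hK⟩ => mem_iUnion.2 ⟨⌈K⌉₊, hK.weaken (Nat.le_ceil K)⟩)
      (iUnion_subset fun n a ha => ⟨n, ha⟩)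
  rw [h]
  exact .iUnion fun n => (isClosed_setOf_antilipschitzWith hg n).measurableSet

theorem measurableSet_setOf_denseRange [PseudoMetricSpace γ]
    [TopologicalSpace.SeparableSpace γ] (hg : ∀ x, Continuous fun a => g a x) :
    MeasurableSet {a | DenseRange (g a)} := by
  obtain ⟨s, hs_count, hs_dense⟩ := TopologicalSpace.exists_countable_dense γ
  have h : {a | DenseRange (g a)} = ⋂ y ∈ s, {a | y ∈ closure (range (g a))} := by
    ext a
    simp only [mem_ofPred_eq, mem_iInter]
    exact ⟨fun ha y _ => ha.closure_eq ▸ mem_univ y,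
      fun ha => (hs_dense.mono fun y hy => ha y hy).of_closure⟩
  rw [h]
  exact .biInter hs_count fun y _ => (isGδ_setOf_mem_closure_range hg y).measurableSet

end FamilyOfMaps

theorem continuous_apply_SOT {𝕜 X : Type*} [NontriviallyNormedField 𝕜] [NormedAddCommGroup X]
    [NormedSpace 𝕜 X] (x : X) : Continuous[SOT 𝕜 X, _] fun T : X →L[𝕜] X => T x :=
  let _ := SOT 𝕜 X
  (continuous_apply x).comp continuous_induced_dom

theorem continuous_algebraMap_sub_apply_SOTprodD {X : Type*} [NormedAddCommGroup X]
    [NormedSpace ℂ X] (x : X) :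
    Continuous[SOTprodD X, _] fun p : (X →L[ℂ] X) × closedBall (0 : ℂ) 1 =>
      (algebraMap ℂ (X →L[ℂ] X) (p.2 : ℂ) - p.1) x := by
  let _ : TopologicalSpace (X →L[ℂ] X) := SOT ℂ X
  simp only [sub_apply, ContinuousLinearMap.algebraMap_apply]
  exact ((continuous_subtype_val.comp continuous_snd).smul continuous_const).sub
    ((continuous_apply_SOT x).comp continuous_fst)

/-- `Δ = {(T, λ) ∈ L(X) × D : λ ∈ σ(T)}` is Borel for the strong operator
topology. -/
theorem Delta_measurableSet
    {X : Type*} [NormedAddCommGroup X] [NormedSpace ℂ X] [CompleteSpace X]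
    [TopologicalSpace.SeparableSpace X] :
    @MeasurableSet ((X →L[ℂ] X) × (closedBall (0 : ℂ) 1)) (@borel _ (SOTprodD X))
      {p : (X →L[ℂ] X) × (closedBall (0 : ℂ) 1) | (p.2 : ℂ) ∈ spectrum ℂ p.1} := by
  let P := (X →L[ℂ] X) × closedBall (0 : ℂ) 1
  let _ : TopologicalSpace P := SOTprodD X
  let _ : MeasurableSpace P := borel P
  have _ : BorelSpace P := ⟨rfl⟩
  let S : P → X →L[ℂ] X := fun p => algebraMap ℂ (X →L[ℂ] X) (p.2 : ℂ) - p.1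
  have hS : ∀ x, Continuous fun p => S p x := continuous_algebraMap_sub_apply_SOTprodD
  have hΔ : {p : P | (p.2 : ℂ) ∈ spectrum ℂ p.1} =
      ({p | DenseRange (S p)} ∩ {p | ∃ K, AntilipschitzWith K (S p)})ᶜ := by
    ext p
    exact spectrum.mem_iff.trans (ContinuousLinearMap.isUnit_iff_denseRange_and_antilipschitz _).not
  rw [hΔ]
  exact ((measurableSet_setOf_denseRange hS).inter
    (measurableSet_setOf_exists_antilipschitzWith hS)).compl
end

section
/- Let X be a separable complex Banach space with a countable dense subset 𝒴 of the unit sphere. The set A = {(T, λ) ∈ L(X) × D : T − λI is not an isomorphism onto its range} equals ⋂_{k≥1} ⋃_{x∈𝒴} {(T, λ) : ‖Tx − λx‖ < 1/k}, and is therefore a Gδσ-type Borel set (a countable intersection of open sets) in (L(X), SOT) × D. -/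
/-!
`T - λI` fails to be bounded below iff `x ↦ ‖Tx - λx‖` takes arbitrarily small values on the
unit sphere; by continuity these values can be taken on the dense subset `Y`. Each condition
`‖Tx - λx‖ < 1/k` at a fixed `x` is open in `(L(X), SOT) × D`, as `T ↦ Tx` is SOT-continuous.
-/

open Metric

theorem exists_mem_lt_iff_of_subset_closure {α : Type*} [TopologicalSpace α] {g : α → ℝ}
    (hg : Continuous g) {s Y : Set α} (hYs : Y ⊆ s) (hsY : s ⊆ closure Y) (c : ℝ) :
    (∃ x ∈ s, g x < c) ↔ ∃ y ∈ Y, g y < c := by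
  refine ⟨fun ⟨x, hx, hgx⟩ => ?_, fun ⟨y, hy, hgy⟩ => ⟨y, hYs hy, hgy⟩⟩
  obtain ⟨y, hgy, hy⟩ :=
    mem_closure_iff.1 (hsY hx) {z | g z < c} (isOpen_lt hg continuous_const) hgx
  exact ⟨y, hy, hgy⟩

theorem forall_pos_iff_forall_one_div_nat {P : ℝ → Prop} (hP : Monotone P) :
    (∀ c > 0, P c) ↔ ∀ k : ℕ, 1 ≤ k → P (1 / k) := by
  refine ⟨fun h k hk => h _ (by positivity), fun h c hc => ?_⟩
  obtain ⟨n, hn⟩ := exists_nat_one_div_lt hc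
  have hPn := h (n + 1) (Nat.le_add_left 1 n)
  push_cast at hPn
  exact hP hn.le hPn

theorem not_exists_pos_le_iff_of_subset_closure {α : Type*} [TopologicalSpace α] {g : α → ℝ}
    (hg : Continuous g) {s Y : Set α} (hYs : Y ⊆ s) (hsY : s ⊆ closure Y) :
    (¬ ∃ c > 0, ∀ x ∈ s, c ≤ g x) ↔ ∀ k : ℕ, 1 ≤ k → ∃ y ∈ Y, g y < 1 / k := by
  push Not
  simp only [exists_mem_lt_iff_of_subset_closure hg hYs hsY]
  exact forall_pos_iff_forall_one_div_nat fun a b hab ⟨y, hy, hya⟩ => ⟨y, hy, hya.trans_le hab⟩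

theorem SOT.continuous_apply {𝕜 X : Type*} [NontriviallyNormedField 𝕜] [NormedAddCommGroup X]
    [NormedSpace 𝕜 X] (x : X) : @Continuous _ _ (SOT 𝕜 X) _ fun T : X →L[𝕜] X => T x := by
  let _ := SOT 𝕜 X
  exact (_root_.continuous_apply x).comp continuous_induced_dom

theorem SOTprodD.isOpen_setOf_norm_sub_smul_lt {X : Type*} [NormedAddCommGroup X]
    [NormedSpace ℂ X] (x : X) (r : ℝ) :
    @IsOpen _ (SOTprodD X) {p | ‖p.1 x - (p.2 : ℂ) • x‖ < r} := by
  let _ := SOT ℂ X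
  have hT : Continuous fun p : (X →L[ℂ] X) × closedBall (0 : ℂ) 1 => p.1 x :=
    (SOT.continuous_apply x).comp continuous_fst
  have hscalar : Continuous fun p : (X →L[ℂ] X) × closedBall (0 : ℂ) 1 => (p.2 : ℂ) • x :=
    (continuous_subtype_val.comp continuous_snd).smul continuous_const
  exact isOpen_lt (hT.sub hscalar).norm continuous_const

theorem A_eq_and_Gdelta_general
    {X : Type*} [NormedAddCommGroup X] [NormedSpace ℂ X]
    (Y : Set X) (hYs : Y ⊆ {x : X | ‖x‖ = 1})
    (hYd : ∀ x : X, ‖x‖ = 1 → x ∈ closure Y) :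
    {p : (X →L[ℂ] X) × (closedBall (0 : ℂ) 1) |
        ¬ ∃ c : ℝ, 0 < c ∧ ∀ x : X, ‖x‖ = 1 →
          c ≤ ‖(p.1 - (p.2 : ℂ) • (1 : X →L[ℂ] X)) x‖} =
      (⋂ k ∈ {k : ℕ | 1 ≤ k}, ⋃ x ∈ Y,
        {p : (X →L[ℂ] X) × (closedBall (0 : ℂ) 1) |
          ‖p.1 x - (p.2 : ℂ) • x‖ < 1 / k}) ∧
    ∃ U : ℕ → Set ((X →L[ℂ] X) × (closedBall (0 : ℂ) 1)),
      (∀ n, @IsOpen _ (SOTprodD X) (U n)) ∧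
      {p : (X →L[ℂ] X) × (closedBall (0 : ℂ) 1) |
          ¬ ∃ c : ℝ, 0 < c ∧ ∀ x : X, ‖x‖ = 1 →
            c ≤ ‖(p.1 - (p.2 : ℂ) • (1 : X →L[ℂ] X)) x‖} = ⋂ n, U n := by
  set V : ℕ → Set ((X →L[ℂ] X) × (closedBall (0 : ℂ) 1)) := fun k =>
    ⋃ x ∈ Y, {p | ‖p.1 x - (p.2 : ℂ) • x‖ < 1 / k}
  have hA : {p : (X →L[ℂ] X) × (closedBall (0 : ℂ) 1) |
        ¬ ∃ c : ℝ, 0 < c ∧ ∀ x : X, ‖x‖ = 1 →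
          c ≤ ‖(p.1 - (p.2 : ℂ) • (1 : X →L[ℂ] X)) x‖} = ⋂ k ≥ 1, V k := by
    ext p
    have hS : Continuous fun x => ‖(p.1 - (p.2 : ℂ) • (1 : X →L[ℂ] X)) x‖ := by fun_prop
    simpa [V] using not_exists_pos_le_iff_of_subset_closure hS hYs hYd
  refine ⟨hA, fun n => V (n + 1), fun n => ?_, hA.trans (Set.iInter_ge_eq_iInter_nat_add V 1)⟩
  let _ := SOTprodD X
  exact isOpen_biUnion fun x _ => SOTprodD.isOpen_setOf_norm_sub_smul_lt x _

/-- The set `A` of pairs `(T, λ) ∈ L(X) × D` with `T - λI` not an isomorphism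
onto its range (i.e. not bounded below) is a countable intersection of sets
open in `(L(X), SOT) × D`, namely `A = ⋂_{k≥1} ⋃_{x ∈ 𝒴} {(T,λ) : ‖Tx - λx‖ < 1/k}`. -/
theorem A_eq_and_Gdelta
    {X : Type*} [NormedAddCommGroup X] [NormedSpace ℂ X]
    [TopologicalSpace.SeparableSpace X]
    (Y : Set X) (hYc : Y.Countable) (hYs : Y ⊆ {x : X | ‖x‖ = 1})
    (hYd : ∀ x : X, ‖x‖ = 1 → x ∈ closure Y) :
    {p : (X →L[ℂ] X) × (closedBall (0 : ℂ) 1) |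
        ¬ ∃ c : ℝ, 0 < c ∧ ∀ x : X, ‖x‖ = 1 →
          c ≤ ‖(p.1 - (p.2 : ℂ) • (1 : X →L[ℂ] X)) x‖} =
      (⋂ k ∈ {k : ℕ | 1 ≤ k}, ⋃ x ∈ Y,
        {p : (X →L[ℂ] X) × (closedBall (0 : ℂ) 1) |
          ‖p.1 x - (p.2 : ℂ) • x‖ < 1 / k}) ∧
    ∃ U : ℕ → Set ((X →L[ℂ] X) × (closedBall (0 : ℂ) 1)),
      (∀ n, @IsOpen _ (SOTprodD X) (U n)) ∧
      {p : (X →L[ℂ] X) × (closedBall (0 : ℂ) 1) |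
          ¬ ∃ c : ℝ, 0 < c ∧ ∀ x : X, ‖x‖ = 1 →
            c ≤ ‖(p.1 - (p.2 : ℂ) • (1 : X →L[ℂ] X)) x‖} = ⋂ n, U n :=
  A_eq_and_Gdelta_general Y hYs hYd
end
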